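/- Let D̄^l = g^{l̄k} ∂/∂z^k and D̄_l = ∂/∂z̄^l − (∂²Φ/∂z̄^l∂z̄^q) D̄^q (summation over repeated indices). Then the following canonical commutation relations hold as operators on smooth functions: [D̄_l, ∂Φ/∂z̄^q] = 0 (where ∂Φ/∂z̄^q denotes the multiplication operator), [D̄_l, D̄^q] = 0, [D̄_l, z̄^q] = δ_l^q, and [D̄^l, ∂Φ/∂z̄^q] = δ_q^l. -/

import Mathlib

open Complex

set_option maxHeartbeats 2000000

noncomputable section

/-- The ring of ℂ-valued functions on ℂⁿ (identified with maps `(Fin n → ℂ) → ℂ`). -/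
abbrev Cf (n : ℕ) := (Fin n → ℂ) → ℂ

/-- Wirtinger derivative ∂/∂z^k = (∂/∂x^k − i ∂/∂y^k)/2. -/
noncomputable def dz {n : ℕ} (k : Fin n) (f : Cf n) : Cf n := fun z =>
  (1 / 2 : ℂ) * (fderiv ℝ f z (Pi.single k 1) - Complex.I * fderiv ℝ f z (Pi.single k Complex.I))

/-- Wirtinger derivative ∂/∂z̄^l = (∂/∂x^l + i ∂/∂y^l)/2. -/
noncomputable def dzbar {n : ℕ} (l : Fin n) (f : Cf n) : Cf n := fun z =>
  (1 / 2 : ℂ) * (fderiv ℝ f z (Pi.single l 1) + Complex.I * fderiv ℝ f z (Pi.single l Complex.I))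


/-- The operator D̄^l = g^{l̄k} ∂/∂z^k. -/
noncomputable def Dbarup {n : ℕ} (ginv : Fin n → Fin n → Cf n) (l : Fin n) (f : Cf n) : Cf n :=
  fun z => ∑ k, ginv l k z * dz k f z

/-- The operator D̄_l = ∂/∂z̄^l − Φ_{l̄ q̄} D̄^q. -/
noncomputable def Dbarlow {n : ℕ} (ginv : Fin n → Fin n → Cf n) (Φ : Cf n) (l : Fin n)
    (f : Cf n) : Cf n :=
  fun z => dzbar l f z - ∑ q, dzbar l (dzbar q Φ) z * Dbarup ginv q f z

variable {n : ℕ} {f g : Cf n} {z : Fin n → ℂ} {k l q : Fin n} {M : Set (Fin n → ℂ)}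

lemma dz_congr (h : f =ᶠ[nhds z] g) : dz k f z = dz k g z := by
  simp only [dz, h.fderiv_eq]

lemma dzbar_congr (h : f =ᶠ[nhds z] g) : dzbar k f z = dzbar k g z := by
  simp only [dzbar, h.fderiv_eq]

lemma dz_const (c : ℂ) : dz k (fun _ => c) z = 0 := by simp [dz]

lemma dzbar_const (c : ℂ) : dzbar k (fun _ => c) z = 0 := by simp [dzbar]

lemma dz_mul (hf : DifferentiableAt ℝ f z) (hg : DifferentiableAt ℝ g z) :
    dz k (fun w => f w * g w) z = dz k f z * g z + f z * dz k g z := by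
  simp only [dz, fderiv_fun_mul hf hg]
  simp only [ContinuousLinearMap.add_apply, ContinuousLinearMap.smul_apply,
    ContinuousLinearMap.smulRight_apply, smul_eq_mul]
  ring

lemma dzbar_mul (hf : DifferentiableAt ℝ f z) (hg : DifferentiableAt ℝ g z) :
    dzbar k (fun w => f w * g w) z = dzbar k f z * g z + f z * dzbar k g z := by
  simp only [dzbar, fderiv_fun_mul hf hg]
  simp only [ContinuousLinearMap.add_apply, ContinuousLinearMap.smul_apply,
    ContinuousLinearMap.smulRight_apply, smul_eq_mul]
  ring

lemma dz_sum {ι : Type*} (s : Finset ι) (F : ι → Cf n)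
    (h : ∀ i ∈ s, DifferentiableAt ℝ (F i) z) :
    dz k (fun w => ∑ i ∈ s, F i w) z = ∑ i ∈ s, dz k (F i) z := by
  simp only [dz, fderiv_fun_sum h, ContinuousLinearMap.sum_apply]
  rw [Finset.mul_sum, ← Finset.sum_sub_distrib, Finset.mul_sum]

lemma dzbar_sum {ι : Type*} (s : Finset ι) (F : ι → Cf n)
    (h : ∀ i ∈ s, DifferentiableAt ℝ (F i) z) :
    dzbar k (fun w => ∑ i ∈ s, F i w) z = ∑ i ∈ s, dzbar k (F i) z := by
  simp only [dzbar, fderiv_fun_sum h, ContinuousLinearMap.sum_apply]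
  rw [Finset.mul_sum, ← Finset.sum_add_distrib, Finset.mul_sum]

lemma dz_sub (hf : DifferentiableAt ℝ f z) (hg : DifferentiableAt ℝ g z) :
    dz k (fun w => f w - g w) z = dz k f z - dz k g z := by
  simp only [dz, fderiv_fun_sub hf hg, ContinuousLinearMap.sub_apply]; ring

lemma conj_coord_hasFDeriv (q : Fin n) (z : Fin n → ℂ) :
    HasFDerivAt (fun w : Fin n → ℂ => (starRingEnd ℂ) (w q))
      ((Complex.conjCLE.toContinuousLinearMap).comp (ContinuousLinearMap.proj q)) z := by
  exact ((Complex.conjCLE.toContinuousLinearMap).comp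
    (ContinuousLinearMap.proj (R := ℝ) (φ := fun _ : Fin n => ℂ) q)).hasFDerivAt

lemma diffAt_conj_coord : DifferentiableAt ℝ (fun w : Fin n → ℂ => (starRingEnd ℂ) (w q)) z :=
  (conj_coord_hasFDeriv q z).differentiableAt

lemma dz_conj_coord : dz k (fun w => (starRingEnd ℂ) (w q)) z = 0 := by
  simp only [dz, (conj_coord_hasFDeriv q z).fderiv]
  simp only [ContinuousLinearMap.coe_comp', Function.comp_apply, ContinuousLinearMap.proj_apply,
    ContinuousLinearEquiv.coe_coe, Complex.conjCLE_apply]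
  rcases eq_or_ne k q with h | h
  · subst h; simp [Pi.single_eq_same]
  · simp [Pi.single_eq_of_ne (Ne.symm h)]

lemma dzbar_conj_coord : dzbar l (fun w => (starRingEnd ℂ) (w q)) z
    = if l = q then 1 else 0 := by
  simp only [dzbar, (conj_coord_hasFDeriv q z).fderiv]
  simp only [ContinuousLinearMap.coe_comp', Function.comp_apply, ContinuousLinearMap.proj_apply,
    ContinuousLinearEquiv.coe_coe, Complex.conjCLE_apply]
  rcases eq_or_ne l q with h | h
  · subst h; simp [Pi.single_eq_same]; ring
  · simp [Pi.single_eq_of_ne (Ne.symm h), h]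

lemma contDiffOn_dz (hM : IsOpen M) (hf : ContDiffOn ℝ (⊤ : ℕ∞) f M) :
    ContDiffOn ℝ (⊤ : ℕ∞) (dz k f) M := by
  have h1 : ContDiffOn ℝ (⊤ : ℕ∞) (fderiv ℝ f) M := hf.fderiv_of_isOpen hM (by simp)
  have h2 : ∀ v : Fin n → ℂ, ContDiffOn ℝ (⊤ : ℕ∞) (fun z => fderiv ℝ f z v) M :=
    fun v => h1.clm_apply contDiffOn_const
  exact (contDiffOn_const.mul ((h2 _).sub (contDiffOn_const.mul (h2 _))))

lemma contDiffOn_dzbar (hM : IsOpen M) (hf : ContDiffOn ℝ (⊤ : ℕ∞) f M) :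
    ContDiffOn ℝ (⊤ : ℕ∞) (dzbar k f) M := by
  have h1 : ContDiffOn ℝ (⊤ : ℕ∞) (fderiv ℝ f) M := hf.fderiv_of_isOpen hM (by simp)
  have h2 : ∀ v : Fin n → ℂ, ContDiffOn ℝ (⊤ : ℕ∞) (fun z => fderiv ℝ f z v) M :=
    fun v => h1.clm_apply contDiffOn_const
  exact (contDiffOn_const.mul ((h2 _).add (contDiffOn_const.mul (h2 _))))

lemma diffAt_of_contDiffOn (hM : IsOpen M) (hf : ContDiffOn ℝ (⊤ : ℕ∞) f M) (hz : z ∈ M) :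
    DifferentiableAt ℝ f z :=
  ((hf.contDiffAt (hM.mem_nhds hz)).differentiableAt (by simp))

/-- directional derivative helper -/
noncomputable def dd {n : ℕ} (v : Fin n → ℂ) (f : Cf n) : Cf n := fun z => fderiv ℝ f z v

lemma dd_swap (hf : ContDiffAt ℝ 2 f z) (v w : Fin n → ℂ) :
    dd v (dd w f) z = dd w (dd v f) z := by
  have hd : DifferentiableAt ℝ (fderiv ℝ f) z :=
    (hf.fderiv_right (m := 1) (by norm_num)).differentiableAt one_ne_zero
  have key : ∀ u : Fin n → ℂ, fderiv ℝ (fun y => fderiv ℝ f y u) z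
      = (fderiv ℝ (fderiv ℝ f) z).flip u := by
    intro u
    have : (fun y => fderiv ℝ f y u) = fun y => (fderiv ℝ f y) u := rfl
    rw [this, fderiv_clm_apply hd (differentiableAt_const u)]
    simp
  have hsymm := hf.isSymmSndFDerivAt (by norm_num)
  show fderiv ℝ (fun y => fderiv ℝ f y w) z v = fderiv ℝ (fun y => fderiv ℝ f y v) z w
  rw [key w, key v]
  simp only [ContinuousLinearMap.flip_apply]
  exact hsymm.eq v w

lemma contDiffOn_dd (hM : IsOpen M) (hf : ContDiffOn ℝ (⊤ : ℕ∞) f M) (u : Fin n → ℂ) :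
    ContDiffOn ℝ (⊤ : ℕ∞) (dd u f) M :=
  (hf.fderiv_of_isOpen hM (by simp)).clm_apply contDiffOn_const

lemma dzbar_eq_dd : dzbar l f = fun w =>
    (1 / 2 : ℂ) * (dd (Pi.single l 1) f w + Complex.I * dd (Pi.single l Complex.I) f w) := rfl

lemma dz_eq_dd : dz k f = fun w =>
    (1 / 2 : ℂ) * (dd (Pi.single k 1) f w - Complex.I * dd (Pi.single k Complex.I) f w) := rfl

lemma dd_combo (hM : IsOpen M) (hf : ContDiffOn ℝ (⊤ : ℕ∞) f M) (hz : z ∈ M)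
    (v u₁ u₂ : Fin n → ℂ) (c : ℂ) :
    dd v (fun w => (1 / 2 : ℂ) * (dd u₁ f w + c * dd u₂ f w)) z
      = (1 / 2 : ℂ) * (dd v (dd u₁ f) z + c * dd v (dd u₂ f) z) := by
  have h1 : DifferentiableAt ℝ (dd u₁ f) z :=
    diffAt_of_contDiffOn hM (contDiffOn_dd hM hf u₁) hz
  have h2 : DifferentiableAt ℝ (dd u₂ f) z :=
    diffAt_of_contDiffOn hM (contDiffOn_dd hM hf u₂) hz
  show fderiv ℝ _ z v = _
  rw [fderiv_const_mul ((h1.fun_add (h2.const_mul c))) ((1:ℂ)/2),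
    fderiv_fun_add h1 (h2.const_mul c), fderiv_const_mul h2 c]
  simp only [ContinuousLinearMap.smul_apply, ContinuousLinearMap.add_apply, smul_eq_mul]
  rfl

lemma dz_dzbar_swap (hM : IsOpen M) (hf : ContDiffOn ℝ (⊤ : ℕ∞) f M) (hz : z ∈ M) :
    dz k (dzbar l f) z = dzbar l (dz k f) z := by
  have hf2 : ContDiffAt ℝ 2 f z := (hf.contDiffAt (hM.mem_nhds hz)).of_le (WithTop.coe_le_coe.mpr le_top)
  have E1 : ∀ v, dd v (dzbar l f) z = (1 / 2 : ℂ) * (dd v (dd (Pi.single l 1) f) z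
      + Complex.I * dd v (dd (Pi.single l Complex.I) f) z) := by
    intro v; rw [dzbar_eq_dd]; exact dd_combo hM hf hz v _ _ _
  have E2 : ∀ v, dd v (dz k f) z = (1 / 2 : ℂ) * (dd v (dd (Pi.single k 1) f) z
      - Complex.I * dd v (dd (Pi.single k Complex.I) f) z) := by
    intro v
    have : dz k f = fun w => (1 / 2 : ℂ) * (dd (Pi.single k 1) f w
        + (-Complex.I) * dd (Pi.single k Complex.I) f w) := by
      funext w; rw [dz_eq_dd]; ring
    rw [this, dd_combo hM hf hz v _ _ _]; ring
  have L : dz k (dzbar l f) z = (1 / 2 : ℂ) * (dd (Pi.single k 1) (dzbar l f) z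
      - Complex.I * dd (Pi.single k Complex.I) (dzbar l f) z) := rfl
  have R : dzbar l (dz k f) z = (1 / 2 : ℂ) * (dd (Pi.single l 1) (dz k f) z
      + Complex.I * dd (Pi.single l Complex.I) (dz k f) z) := rfl
  rw [L, R, E1, E1, E2, E2,
    dd_swap hf2 (Pi.single k 1) (Pi.single l 1),
    dd_swap hf2 (Pi.single k 1) (Pi.single l Complex.I),
    dd_swap hf2 (Pi.single k Complex.I) (Pi.single l 1),
    dd_swap hf2 (Pi.single k Complex.I) (Pi.single l Complex.I)]
  ring

lemma dz_dz_swap (hM : IsOpen M) (hf : ContDiffOn ℝ (⊤ : ℕ∞) f M) (hz : z ∈ M) :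
    dz k (dz l f) z = dz l (dz k f) z := by
  have hf2 : ContDiffAt ℝ 2 f z := (hf.contDiffAt (hM.mem_nhds hz)).of_le (WithTop.coe_le_coe.mpr le_top)
  have E2 : ∀ (m : Fin n) v, dd v (dz m f) z = (1 / 2 : ℂ) * (dd v (dd (Pi.single m 1) f) z
      - Complex.I * dd v (dd (Pi.single m Complex.I) f) z) := by
    intro m v
    have : dz m f = fun w => (1 / 2 : ℂ) * (dd (Pi.single m 1) f w
        + (-Complex.I) * dd (Pi.single m Complex.I) f w) := by
      funext w; rw [dz_eq_dd]; ring
    rw [this, dd_combo hM hf hz v _ _ _]; ring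
  have L : dz k (dz l f) z = (1 / 2 : ℂ) * (dd (Pi.single k 1) (dz l f) z
      - Complex.I * dd (Pi.single k Complex.I) (dz l f) z) := rfl
  have R : dz l (dz k f) z = (1 / 2 : ℂ) * (dd (Pi.single l 1) (dz k f) z
      - Complex.I * dd (Pi.single l Complex.I) (dz k f) z) := rfl
  rw [L, R, E2, E2, E2, E2,
    dd_swap hf2 (Pi.single k 1) (Pi.single l 1),
    dd_swap hf2 (Pi.single k 1) (Pi.single l Complex.I),
    dd_swap hf2 (Pi.single k Complex.I) (Pi.single l 1),
    dd_swap hf2 (Pi.single k Complex.I) (Pi.single l Complex.I)]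
  ring

lemma diffAt_finprod {ι : Type*} (s : Finset ι) (g : ι → Cf n)
    (h : ∀ i ∈ s, DifferentiableAt ℝ (g i) z) :
    DifferentiableAt ℝ (fun w => ∏ i ∈ s, g i w) z := by
  classical
  induction s using Finset.induction with
  | empty => simpa using differentiableAt_const (1 : ℂ)
  | insert a s' hx ih =>
    simp only [Finset.prod_insert hx]
    exact (h a (Finset.mem_insert_self a s')).mul
      (ih fun i hi => h i (Finset.mem_insert_of_mem hi))

lemma diffAt_det {A : (Fin n → ℂ) → Matrix (Fin n) (Fin n) ℂ}
    (h : ∀ i j, DifferentiableAt ℝ (fun w => A w i j) z) :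
    DifferentiableAt ℝ (fun w => (A w).det) z := by
  simp only [Matrix.det_apply']
  exact DifferentiableAt.fun_sum fun σ _ =>
    ((diffAt_finprod Finset.univ (fun i w => A w (σ i) i) fun i _ => h (σ i) i).const_mul _)

lemma diffAt_adjugate {A : (Fin n → ℂ) → Matrix (Fin n) (Fin n) ℂ}
    (h : ∀ i j, DifferentiableAt ℝ (fun w => A w i j) z) (i j : Fin n) :
    DifferentiableAt ℝ (fun w => (A w).adjugate i j) z := by
  simp only [Matrix.adjugate_apply]
  apply diffAt_det
  intro a b
  simp only [Matrix.updateRow_apply]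
  split_ifs
  · exact differentiableAt_const _
  · exact h a b

section ginv
variable (Φ : Cf n) (ginv : Fin n → Fin n → Cf n)

/-- The Hessian matrix as a matrix-valued function. -/
def Hmat (w : Fin n → ℂ) : Matrix (Fin n) (Fin n) ℂ :=
  Matrix.of fun i j => dz i (dzbar j Φ) w

lemma ginv_formula
    (hinv1 : ∀ l q : Fin n, ∀ z ∈ M,
      (∑ k, ginv l k z * dz k (dzbar q Φ) z) = if l = q then 1 else 0)
    {w : Fin n → ℂ} (hw : w ∈ M) :
    (Hmat Φ w).det ≠ 0 ∧
      ∀ a b, ginv a b w = (Hmat Φ w).det⁻¹ * (Hmat Φ w).adjugate a b := by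
  have hleft : (Matrix.of fun i j => ginv i j w) * Hmat Φ w = 1 := by
    ext i j
    simp only [Matrix.mul_apply, Matrix.one_apply, Hmat, Matrix.of_apply]
    exact hinv1 i j w hw
  have hdet : IsUnit (Hmat Φ w).det := Matrix.isUnit_det_of_left_inverse hleft
  have hinv : (Hmat Φ w)⁻¹ = Matrix.of fun i j => ginv i j w :=
    Matrix.inv_eq_left_inv hleft
  refine ⟨hdet.ne_zero, fun a b => ?_⟩
  have := congrArg (fun m => m a b) hinv
  simp only [Matrix.inv_def, Matrix.smul_apply, smul_eq_mul, Matrix.of_apply,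
    Ring.inverse_eq_inv'] at this
  exact this.symm

lemma ginv_diffAt (hM : IsOpen M) (hΦ : ContDiffOn ℝ (⊤ : ℕ∞) Φ M)
    (hinv1 : ∀ l q : Fin n, ∀ z ∈ M,
      (∑ k, ginv l k z * dz k (dzbar q Φ) z) = if l = q then 1 else 0)
    {w : Fin n → ℂ} (hw : w ∈ M) (a b : Fin n) :
    DifferentiableAt ℝ (ginv a b) w := by
  have hent : ∀ i j, DifferentiableAt ℝ (fun w' => Hmat Φ w' i j) w := fun i j =>
    diffAt_of_contDiffOn hM (contDiffOn_dz hM (contDiffOn_dzbar hM hΦ)) hw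
  have hne := (ginv_formula Φ ginv hinv1 hw).1
  have hF : DifferentiableAt ℝ
      (fun w' => (Hmat Φ w').det⁻¹ * (Hmat Φ w').adjugate a b) w :=
    ((diffAt_det hent).inv hne).mul (diffAt_adjugate hent a b)
  apply hF.congr_of_eventuallyEq
  filter_upwards [hM.mem_nhds hw] with w' hw'
  exact ((ginv_formula Φ ginv hinv1 hw').2 a b)

end ginv

lemma ginv_deriv (hM : IsOpen M) (Φ : Cf n) (hΦ : ContDiffOn ℝ (⊤ : ℕ∞) Φ M)
    (ginv : Fin n → Fin n → Cf n)
    (hinv1 : ∀ l q : Fin n, ∀ z ∈ M,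
      (∑ k, ginv l k z * dz k (dzbar q Φ) z) = if l = q then 1 else 0)
    (hinv2 : ∀ k p : Fin n, ∀ z ∈ M,
      (∑ l, dz k (dzbar l Φ) z * ginv l p z) = if k = p then 1 else 0)
    {z : Fin n → ℂ} (hz : z ∈ M)
    (T : Cf n → Cf n)
    (Tcongr : ∀ u v : Cf n, u =ᶠ[nhds z] v → T u z = T v z)
    (Tconst : ∀ c : ℂ, T (fun _ => c) z = 0)
    (Tsum : ∀ F : Fin n → Cf n, (∀ i, DifferentiableAt ℝ (F i) z) →
       T (fun w => ∑ i, F i w) z = ∑ i, T (F i) z)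
    (Tmul : ∀ u v : Cf n, DifferentiableAt ℝ u z → DifferentiableAt ℝ v z →
       T (fun w => u w * v w) z = T u z * v z + u z * T v z)
    (a b : Fin n) :
    T (ginv a b) z
      = -∑ c, ∑ d, ginv a c z * T (dz c (dzbar d Φ)) z * ginv d b z := by
  set H : Fin n → Fin n → Cf n := fun c d => dz c (dzbar d Φ) with hH
  have hHdiff : ∀ c d, DifferentiableAt ℝ (H c d) z :=
    fun c d => diffAt_of_contDiffOn hM (contDiffOn_dz hM (contDiffOn_dzbar hM hΦ)) hz
  have hGdiff : ∀ a b, DifferentiableAt ℝ (ginv a b) z :=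
    fun a b => ginv_diffAt Φ ginv hM hΦ hinv1 hz a b
  have star : ∀ p, ∑ k, T (ginv a k) z * H k p z = -∑ k, ginv a k z * T (H k p) z := by
    intro p
    have h0 : T (fun w => ∑ k, ginv a k w * H k p w) z = 0 := by
      rw [Tcongr _ (fun _ => if a = p then (1:ℂ) else 0) ?_, Tconst]
      filter_upwards [hM.mem_nhds hz] with w hw
      exact hinv1 a p w hw
    rw [Tsum (fun k => fun w => ginv a k w * H k p w)
      (fun k => (hGdiff a k).mul (hHdiff k p))] at h0
    rw [Finset.sum_congr rfl (fun k _ => Tmul _ _ (hGdiff a k) (hHdiff k p))] at h0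
    rw [Finset.sum_add_distrib] at h0
    linear_combination h0
  calc T (ginv a b) z
      = ∑ p, T (ginv a p) z * (if p = b then 1 else 0) := by
        simp [Finset.sum_ite_eq', mul_ite]
    _ = ∑ p, T (ginv a p) z * (∑ d, H p d z * ginv d b z) := by
        refine Finset.sum_congr rfl fun p _ => ?_
        rw [hinv2 p b z hz]
    _ = ∑ p, ∑ d, (T (ginv a p) z * H p d z) * ginv d b z := by
        refine Finset.sum_congr rfl fun p _ => ?_
        rw [Finset.mul_sum]
        exact Finset.sum_congr rfl fun d _ => by ring
    _ = ∑ d, (∑ p, T (ginv a p) z * H p d z) * ginv d b z := by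
        rw [Finset.sum_comm]
        exact Finset.sum_congr rfl fun d _ => (Finset.sum_mul _ _ _).symm
    _ = ∑ d, (-∑ c, ginv a c z * T (H c d) z) * ginv d b z := by
        exact Finset.sum_congr rfl fun d _ => by rw [star d]
    _ = -∑ c, ∑ d, ginv a c z * T (H c d) z * ginv d b z := by
        simp only [neg_mul, Finset.sum_mul, ← Finset.sum_neg_distrib]
        rw [Finset.sum_comm]


lemma sum_perm3 {α : Type*} {R : Type*} [Fintype α] [AddCommMonoid R] (F : α → α → α → R) :
    (∑ a, ∑ b, ∑ c, F a b c) = ∑ b, ∑ c, ∑ a, F a b c := by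
  rw [Finset.sum_comm]
  exact Finset.sum_congr rfl fun b _ => Finset.sum_comm

lemma sum_perm5 {α : Type*} {R : Type*} [Fintype α] [AddCommMonoid R]
    (F : α → α → α → α → α → R) :
    (∑ p, ∑ m, ∑ k, ∑ c, ∑ d, F p m k c d) = ∑ c, ∑ p, ∑ k, ∑ m, ∑ d, F p m k c d := by
  calc (∑ p, ∑ m, ∑ k, ∑ c, ∑ d, F p m k c d)
      = ∑ p, ∑ k, ∑ m, ∑ c, ∑ d, F p m k c d :=
        Finset.sum_congr rfl fun p _ => Finset.sum_comm
    _ = ∑ p, ∑ k, ∑ c, ∑ m, ∑ d, F p m k c d :=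
        Finset.sum_congr rfl fun p _ => Finset.sum_congr rfl fun k _ => Finset.sum_comm
    _ = ∑ p, ∑ c, ∑ k, ∑ m, ∑ d, F p m k c d :=
        Finset.sum_congr rfl fun p _ => Finset.sum_comm
    _ = ∑ c, ∑ p, ∑ k, ∑ m, ∑ d, F p m k c d := Finset.sum_comm


/-- Canonical commutation relations (Lemma 1):
`[D̄_l, ∂Φ/∂z̄^q] = 0`, `[D̄_l, D̄^q] = 0`, `[D̄_l, z̄^q] = δ_l^q`, `[D̄^l, ∂Φ/∂z̄^q] = δ_q^l`. -/
theorem stmt3 {n : ℕ} (M : Set (Fin n → ℂ)) (hM : IsOpen M) (Φ : Cf n)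
    (hΦ : ContDiffOn ℝ (⊤ : ℕ∞) Φ M)
    (ginv : Fin n → Fin n → Cf n)
    (hinv1 : ∀ l q : Fin n, ∀ z ∈ M,
      (∑ k, ginv l k z * dz k (dzbar q Φ) z) = if l = q then 1 else 0)
    (hinv2 : ∀ k p : Fin n, ∀ z ∈ M,
      (∑ l, dz k (dzbar l Φ) z * ginv l p z) = if k = p then 1 else 0)
    (l q : Fin n) (f : Cf n) (hf : ContDiffOn ℝ (⊤ : ℕ∞) f M) (z : Fin n → ℂ) (hz : z ∈ M) :
    Dbarlow ginv Φ l (fun w => dzbar q Φ w * f w) z = dzbar q Φ z * Dbarlow ginv Φ l f z ∧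
    Dbarlow ginv Φ l (Dbarup ginv q f) z = Dbarup ginv q (Dbarlow ginv Φ l f) z ∧
    Dbarlow ginv Φ l (fun w => (starRingEnd ℂ) (w q) * f w) z
      = (starRingEnd ℂ) (z q) * Dbarlow ginv Φ l f z + (if l = q then 1 else 0) * f z ∧
    Dbarup ginv l (fun w => dzbar q Φ w * f w) z
      = dzbar q Φ z * Dbarup ginv l f z + (if q = l then 1 else 0) * f z := by
  have hdf : DifferentiableAt ℝ f z := diffAt_of_contDiffOn hM hf hz
  have hdΦb : ∀ p, DifferentiableAt ℝ (dzbar p Φ) z :=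
    fun p => diffAt_of_contDiffOn hM (contDiffOn_dzbar hM hΦ) hz
  have hdzf : ∀ k, DifferentiableAt ℝ (dz k f) z :=
    fun k => diffAt_of_contDiffOn hM (contDiffOn_dz hM hf) hz
  have hdzbf : ∀ j, DifferentiableAt ℝ (dzbar j f) z :=
    fun j => diffAt_of_contDiffOn hM (contDiffOn_dzbar hM hf) hz
  have hP : ∀ j p, DifferentiableAt ℝ (dzbar j (dzbar p Φ)) z :=
    fun j p => diffAt_of_contDiffOn hM (contDiffOn_dzbar hM (contDiffOn_dzbar hM hΦ)) hz
  have hG : ∀ a b, DifferentiableAt ℝ (ginv a b) z :=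
    fun a b => ginv_diffAt Φ ginv hM hΦ hinv1 hz a b
  -- Part 4 (generalized)
  have part4 : ∀ l' q' : Fin n, Dbarup ginv l' (fun w => dzbar q' Φ w * f w) z
      = dzbar q' Φ z * Dbarup ginv l' f z + (if q' = l' then 1 else 0) * f z := by
    intro l' q'
    show (∑ k, ginv l' k z * dz k (fun w => dzbar q' Φ w * f w) z) = _
    calc (∑ k, ginv l' k z * dz k (fun w => dzbar q' Φ w * f w) z)
        = ∑ k, (ginv l' k z * dz k (dzbar q' Φ) z * f z
            + dzbar q' Φ z * (ginv l' k z * dz k f z)) := by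
          refine Finset.sum_congr rfl fun k _ => ?_
          rw [dz_mul (hdΦb q') hdf]; ring
      _ = (∑ k, ginv l' k z * dz k (dzbar q' Φ) z) * f z
            + dzbar q' Φ z * ∑ k, ginv l' k z * dz k f z := by
          rw [Finset.sum_add_distrib, Finset.sum_mul, Finset.mul_sum]
      _ = dzbar q' Φ z * Dbarup ginv l' f z + (if q' = l' then 1 else 0) * f z := by
          rw [hinv1 l' q' z hz]
          have : (if l' = q' then (1:ℂ) else 0) = if q' = l' then 1 else 0 := by
            simp [eq_comm]
          rw [this]; ring_nf; rfl
  -- Part 3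
  have part3 : Dbarlow ginv Φ l (fun w => (starRingEnd ℂ) (w q) * f w) z
      = (starRingEnd ℂ) (z q) * Dbarlow ginv Φ l f z + (if l = q then 1 else 0) * f z := by
    show dzbar l (fun w => (starRingEnd ℂ) (w q) * f w) z
        - ∑ p, dzbar l (dzbar p Φ) z * Dbarup ginv p (fun w => (starRingEnd ℂ) (w q) * f w) z
        = _
    have h1 : dzbar l (fun w => (starRingEnd ℂ) (w q) * f w) z
        = (if l = q then 1 else 0) * f z + (starRingEnd ℂ) (z q) * dzbar l f z := by
      rw [dzbar_mul diffAt_conj_coord hdf, dzbar_conj_coord]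
    have h2 : ∀ p, Dbarup ginv p (fun w => (starRingEnd ℂ) (w q) * f w) z
        = (starRingEnd ℂ) (z q) * Dbarup ginv p f z := by
      intro p
      show (∑ k, ginv p k z * dz k (fun w => (starRingEnd ℂ) (w q) * f w) z) = _
      calc (∑ k, ginv p k z * dz k (fun w => (starRingEnd ℂ) (w q) * f w) z)
          = ∑ k, (starRingEnd ℂ) (z q) * (ginv p k z * dz k f z) := by
            refine Finset.sum_congr rfl fun k _ => ?_
            rw [dz_mul diffAt_conj_coord hdf, dz_conj_coord]; ring
        _ = (starRingEnd ℂ) (z q) * Dbarup ginv p f z := by rw [← Finset.mul_sum]; rfl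
    rw [h1]
    rw [Finset.sum_congr rfl fun p _ => by rw [h2 p]]
    have : Dbarlow ginv Φ l f z
        = dzbar l f z - ∑ p, dzbar l (dzbar p Φ) z * Dbarup ginv p f z := rfl
    rw [this]
    rw [show ∑ p, dzbar l (dzbar p Φ) z * ((starRingEnd ℂ) (z q) * Dbarup ginv p f z)
        = (starRingEnd ℂ) (z q) * ∑ p, dzbar l (dzbar p Φ) z * Dbarup ginv p f z from by
      rw [Finset.mul_sum]; exact Finset.sum_congr rfl fun p _ => by ring]
    ring
  -- Part 1
  have part1 : Dbarlow ginv Φ l (fun w => dzbar q Φ w * f w) z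
      = dzbar q Φ z * Dbarlow ginv Φ l f z := by
    show dzbar l (fun w => dzbar q Φ w * f w) z
        - ∑ p, dzbar l (dzbar p Φ) z * Dbarup ginv p (fun w => dzbar q Φ w * f w) z = _
    have h1 : dzbar l (fun w => dzbar q Φ w * f w) z
        = dzbar l (dzbar q Φ) z * f z + dzbar q Φ z * dzbar l f z :=
      dzbar_mul (hdΦb q) hdf
    rw [h1, Finset.sum_congr rfl fun p _ => by rw [part4 p q]]
    have exp : ∑ p, dzbar l (dzbar p Φ) z * (dzbar q Φ z * Dbarup ginv p f z
          + (if q = p then 1 else 0) * f z)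
        = dzbar q Φ z * (∑ p, dzbar l (dzbar p Φ) z * Dbarup ginv p f z)
          + dzbar l (dzbar q Φ) z * f z := by
      rw [Finset.mul_sum]
      have : ∀ p : Fin n, dzbar l (dzbar p Φ) z * (dzbar q Φ z * Dbarup ginv p f z
          + (if q = p then 1 else 0) * f z)
          = dzbar q Φ z * (dzbar l (dzbar p Φ) z * Dbarup ginv p f z)
            + (if q = p then 1 else 0) * (dzbar l (dzbar p Φ) z * f z) := by
        intro p; ring
      rw [Finset.sum_congr rfl fun p _ => this p, Finset.sum_add_distrib]
      congr 1
      simp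
    rw [exp]
    have : Dbarlow ginv Φ l f z
        = dzbar l f z - ∑ p, dzbar l (dzbar p Φ) z * Dbarup ginv p f z := rfl
    rw [this]
    ring
  refine ⟨part1, ?_, part3, part4 l q⟩
  -- Part 2
  have sw1 : ∀ k : Fin n, dzbar l (dz k f) z = dz k (dzbar l f) z :=
    fun k => (dz_dzbar_swap hM hf hz).symm
  have sw2 : ∀ m k : Fin n, dz m (dz k f) z = dz k (dz m f) z :=
    fun m k => dz_dz_swap hM hf hz
  have sw3 : ∀ c d : Fin n, dzbar l (dz c (dzbar d Φ)) z = dz c (dzbar l (dzbar d Φ)) z :=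
    fun c d => (dz_dzbar_swap hM (contDiffOn_dzbar hM hΦ) hz).symm
  have sw4 : ∀ m c d : Fin n, dz m (dz c (dzbar d Φ)) z = dz c (dz m (dzbar d Φ)) z :=
    fun m c d => dz_dz_swap hM (contDiffOn_dzbar hM hΦ) hz
  have gdz : ∀ m a b : Fin n, dz m (ginv a b) z
      = -∑ c, ∑ d, ginv a c z * dz m (dz c (dzbar d Φ)) z * ginv d b z :=
    fun m a b => ginv_deriv hM Φ hΦ ginv hinv1 hinv2 hz (dz m)
      (fun u v h => dz_congr h) (fun c => dz_const c)
      (fun F h => dz_sum Finset.univ F (fun i _ => h i))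
      (fun u v hu hv => dz_mul hu hv) a b
  have gdzb : ∀ a b : Fin n, dzbar l (ginv a b) z
      = -∑ c, ∑ d, ginv a c z * dzbar l (dz c (dzbar d Φ)) z * ginv d b z :=
    fun a b => ginv_deriv hM Φ hΦ ginv hinv1 hinv2 hz (dzbar l)
      (fun u v h => dzbar_congr h) (fun c => dzbar_const c)
      (fun F h => dzbar_sum Finset.univ F (fun i _ => h i))
      (fun u v hu hv => dzbar_mul hu hv) a b
  have hUdiff : ∀ p, DifferentiableAt ℝ (Dbarup ginv p f) z :=
    fun p => DifferentiableAt.fun_sum fun k _ => (hG p k).mul (hdzf k)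
  have expA : dzbar l (Dbarup ginv q f) z
      = ∑ k, (dzbar l (ginv q k) z * dz k f z + ginv q k z * dzbar l (dz k f) z) := by
    calc dzbar l (Dbarup ginv q f) z
        = ∑ k, dzbar l (fun w => ginv q k w * dz k f w) z :=
          dzbar_sum Finset.univ (fun k => fun w => ginv q k w * dz k f w)
            (fun k _ => (hG q k).mul (hdzf k))
      _ = _ := Finset.sum_congr rfl fun k _ => dzbar_mul (hG q k) (hdzf k)
  have expB : ∀ m p' : Fin n, dz m (Dbarup ginv p' f) z
      = ∑ k, (dz m (ginv p' k) z * dz k f z + ginv p' k z * dz m (dz k f) z) := by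
    intro m p'
    calc dz m (Dbarup ginv p' f) z
        = ∑ k, dz m (fun w => ginv p' k w * dz k f w) z :=
          dz_sum Finset.univ (fun k => fun w => ginv p' k w * dz k f w)
            (fun k _ => (hG p' k).mul (hdzf k))
      _ = _ := Finset.sum_congr rfl fun k _ => dz_mul (hG p' k) (hdzf k)
  have expC : ∀ k : Fin n, dz k (Dbarlow ginv Φ l f) z
      = dz k (dzbar l f) z - ∑ p, (dz k (dzbar l (dzbar p Φ)) z * Dbarup ginv p f z
          + dzbar l (dzbar p Φ) z * dz k (Dbarup ginv p f) z) := by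
    intro k
    calc dz k (Dbarlow ginv Φ l f) z
        = dz k (fun w => dzbar l f w
            - ∑ p, dzbar l (dzbar p Φ) w * Dbarup ginv p f w) z := rfl
      _ = dz k (dzbar l f) z
          - dz k (fun w => ∑ p, dzbar l (dzbar p Φ) w * Dbarup ginv p f w) z :=
          dz_sub (hdzbf l) (DifferentiableAt.fun_sum fun p _ => (hP l p).mul (hUdiff p))
      _ = dz k (dzbar l f) z
          - ∑ p, dz k (fun w => dzbar l (dzbar p Φ) w * Dbarup ginv p f w) z := by
          rw [dz_sum Finset.univ (fun p => fun w => dzbar l (dzbar p Φ) w * Dbarup ginv p f w)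
            (fun p _ => (hP l p).mul (hUdiff p))]
      _ = _ := by
          congr 1
          exact Finset.sum_congr rfl fun p _ => dz_mul (hP l p) (hUdiff p)
  have hDU : ∀ p, Dbarup ginv p (Dbarup ginv q f) z
      = ∑ m, ∑ k, (ginv p m z * dz m (ginv q k) z * dz k f z
          + ginv p m z * ginv q k z * dz m (dz k f) z) := by
    intro p
    show (∑ m, ginv p m z * dz m (Dbarup ginv q f) z) = _
    refine Finset.sum_congr rfl fun m _ => ?_
    rw [expB m q, Finset.mul_sum]
    exact Finset.sum_congr rfl fun k _ => by ring
  have LHS' : Dbarlow ginv Φ l (Dbarup ginv q f) z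
      = ((∑ k, dzbar l (ginv q k) z * dz k f z)
          + ∑ k, ginv q k z * dzbar l (dz k f) z)
        - ((∑ p, ∑ m, ∑ k, dzbar l (dzbar p Φ) z * ginv p m z * dz m (ginv q k) z * dz k f z)
          + ∑ p, ∑ m, ∑ k,
              dzbar l (dzbar p Φ) z * ginv p m z * ginv q k z * dz m (dz k f) z) := by
    show dzbar l (Dbarup ginv q f) z
        - (∑ p, dzbar l (dzbar p Φ) z * Dbarup ginv p (Dbarup ginv q f) z) = _
    rw [expA, Finset.sum_add_distrib]
    congr 1
    rw [← Finset.sum_add_distrib]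
    refine Finset.sum_congr rfl fun p _ => ?_
    rw [hDU p, Finset.mul_sum, ← Finset.sum_add_distrib]
    refine Finset.sum_congr rfl fun m _ => ?_
    rw [Finset.mul_sum, ← Finset.sum_add_distrib]
    exact Finset.sum_congr rfl fun k _ => by ring
  have RHS' : Dbarup ginv q (Dbarlow ginv Φ l f) z
      = (∑ k, ginv q k z * dz k (dzbar l f) z)
        - ((∑ k, ∑ p, ∑ m,
              ginv q k z * dz k (dzbar l (dzbar p Φ)) z * ginv p m z * dz m f z)
          + ((∑ k, ∑ p, ∑ m,
                ginv q k z * dzbar l (dzbar p Φ) z * dz k (ginv p m) z * dz m f z)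
            + ∑ k, ∑ p, ∑ m,
                ginv q k z * dzbar l (dzbar p Φ) z * ginv p m z * dz k (dz m f) z)) := by
    have hk : ∀ k : Fin n, ginv q k z * dz k (Dbarlow ginv Φ l f) z
        = ginv q k z * dz k (dzbar l f) z
          - ((∑ p, ∑ m, ginv q k z * dz k (dzbar l (dzbar p Φ)) z * ginv p m z * dz m f z)
            + ((∑ p, ∑ m, ginv q k z * dzbar l (dzbar p Φ) z * dz k (ginv p m) z * dz m f z)
              + ∑ p, ∑ m,
                  ginv q k z * dzbar l (dzbar p Φ) z * ginv p m z * dz k (dz m f) z)) := by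
      intro k
      rw [expC k, mul_sub]
      congr 1
      have hp : ∀ p : Fin n, ginv q k z * (dz k (dzbar l (dzbar p Φ)) z * Dbarup ginv p f z
          + dzbar l (dzbar p Φ) z * dz k (Dbarup ginv p f) z)
          = (∑ m, ginv q k z * dz k (dzbar l (dzbar p Φ)) z * ginv p m z * dz m f z)
            + ((∑ m, ginv q k z * dzbar l (dzbar p Φ) z * dz k (ginv p m) z * dz m f z)
              + ∑ m, ginv q k z * dzbar l (dzbar p Φ) z * ginv p m z * dz k (dz m f) z) := by
        intro p
        rw [expB k p, show Dbarup ginv p f z = ∑ m, ginv p m z * dz m f z from rfl]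
        rw [Finset.mul_sum, Finset.mul_sum, ← Finset.sum_add_distrib, Finset.mul_sum,
          ← Finset.sum_add_distrib, ← Finset.sum_add_distrib]
        exact Finset.sum_congr rfl fun m _ => by ring
      rw [Finset.mul_sum]
      rw [Finset.sum_congr rfl fun p _ => hp p]
      rw [Finset.sum_add_distrib, Finset.sum_add_distrib]
    show (∑ k, ginv q k z * dz k (Dbarlow ginv Φ l f) z) = _
    rw [Finset.sum_congr rfl fun k _ => hk k]
    rw [Finset.sum_sub_distrib, Finset.sum_add_distrib, Finset.sum_add_distrib]
  -- matching of the six pieces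
  have h21 : (∑ k, ginv q k z * dzbar l (dz k f) z)
      = ∑ k, ginv q k z * dz k (dzbar l f) z :=
    Finset.sum_congr rfl fun k _ => by rw [sw1 k]
  have h4 : (∑ p, ∑ m, ∑ k, dzbar l (dzbar p Φ) z * ginv p m z * ginv q k z * dz m (dz k f) z)
      = ∑ k, ∑ p, ∑ m, ginv q k z * dzbar l (dzbar p Φ) z * ginv p m z * dz k (dz m f) z := by
    rw [sum_perm3 (fun k p m =>
      ginv q k z * dzbar l (dzbar p Φ) z * ginv p m z * dz k (dz m f) z)]
    refine Finset.sum_congr rfl fun p _ => Finset.sum_congr rfl fun m _ =>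
      Finset.sum_congr rfl fun k _ => ?_
    rw [sw2 m k]; ring
  have h12 : (∑ k, dzbar l (ginv q k) z * dz k f z)
      = -∑ k, ∑ p, ∑ m, ginv q k z * dz k (dzbar l (dzbar p Φ)) z * ginv p m z * dz m f z := by
    have e1 : ∀ k : Fin n, dzbar l (ginv q k) z * dz k f z
        = -∑ c, ∑ d, ginv q c z * dz c (dzbar l (dzbar d Φ)) z * ginv d k z * dz k f z := by
      intro k
      rw [gdzb q k, neg_mul, Finset.sum_mul]
      congr 1
      refine Finset.sum_congr rfl fun c _ => ?_
      rw [Finset.sum_mul]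
      exact Finset.sum_congr rfl fun d _ => by rw [sw3 c d]
    rw [Finset.sum_congr rfl fun k _ => e1 k, Finset.sum_neg_distrib]
    congr 1
    rw [sum_perm3 (fun k c d =>
      ginv q c z * dz c (dzbar l (dzbar d Φ)) z * ginv d k z * dz k f z)]
  have h3 : (∑ p, ∑ m, ∑ k, dzbar l (dzbar p Φ) z * ginv p m z * dz m (ginv q k) z * dz k f z)
      = ∑ k, ∑ p, ∑ m, ginv q k z * dzbar l (dzbar p Φ) z * dz k (ginv p m) z * dz m f z := by
    have eL : ∀ p m k : Fin n,
        dzbar l (dzbar p Φ) z * ginv p m z * dz m (ginv q k) z * dz k f z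
        = -∑ c, ∑ d, dzbar l (dzbar p Φ) z * ginv p m z
            * (ginv q c z * dz c (dz m (dzbar d Φ)) z * ginv d k z) * dz k f z := by
      intro p m k
      rw [gdz m q k, mul_neg, neg_mul]
      congr 1
      simp only [Finset.mul_sum, Finset.sum_mul]
      refine Finset.sum_congr rfl fun c _ => Finset.sum_congr rfl fun d _ => ?_
      rw [sw4 m c d]
      try ring
    have eR : ∀ k p m : Fin n,
        ginv q k z * dzbar l (dzbar p Φ) z * dz k (ginv p m) z * dz m f z
        = -∑ c, ∑ d, ginv q k z * dzbar l (dzbar p Φ) z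
            * (ginv p c z * dz k (dz c (dzbar d Φ)) z * ginv d m z) * dz m f z := by
      intro k p m
      rw [gdz k p m, mul_neg, neg_mul]
      congr 1
      simp only [Finset.mul_sum, Finset.sum_mul]
      try exact Finset.sum_congr rfl fun c _ => Finset.sum_congr rfl fun d _ => by ring
    calc (∑ p, ∑ m, ∑ k, dzbar l (dzbar p Φ) z * ginv p m z * dz m (ginv q k) z * dz k f z)
        = -∑ p, ∑ m, ∑ k, ∑ c, ∑ d, dzbar l (dzbar p Φ) z * ginv p m z
            * (ginv q c z * dz c (dz m (dzbar d Φ)) z * ginv d k z) * dz k f z := by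
          rw [Finset.sum_congr rfl fun p _ => Finset.sum_congr rfl fun m _ =>
            Finset.sum_congr rfl fun k _ => eL p m k]
          simp only [Finset.sum_neg_distrib]
      _ = -∑ c, ∑ p, ∑ k, ∑ m, ∑ d, dzbar l (dzbar p Φ) z * ginv p m z
            * (ginv q c z * dz c (dz m (dzbar d Φ)) z * ginv d k z) * dz k f z := by
          rw [sum_perm5 (fun p m k c d => dzbar l (dzbar p Φ) z * ginv p m z
            * (ginv q c z * dz c (dz m (dzbar d Φ)) z * ginv d k z) * dz k f z)]
      _ = ∑ k, ∑ p, ∑ m, -∑ c, ∑ d, ginv q k z * dzbar l (dzbar p Φ) z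
            * (ginv p c z * dz k (dz c (dzbar d Φ)) z * ginv d m z) * dz m f z := by
          simp only [Finset.sum_neg_distrib]
          congr 1
          refine Finset.sum_congr rfl fun c _ => Finset.sum_congr rfl fun p _ =>
            Finset.sum_congr rfl fun k _ => Finset.sum_congr rfl fun m _ =>
            Finset.sum_congr rfl fun d _ => ?_
          ring
      _ = ∑ k, ∑ p, ∑ m, ginv q k z * dzbar l (dzbar p Φ) z * dz k (ginv p m) z
            * dz m f z :=
          Finset.sum_congr rfl fun k _ => Finset.sum_congr rfl fun p _ =>
            Finset.sum_congr rfl fun m _ => (eR k p m).symm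
  rw [LHS', RHS', h21, h4, h12, h3]
  ring
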